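/- arXiv:2311.11536 — 3 statements merged into one kernel-verified Lean document; each statement's English description precedes it below -/
import Mathlib

section
/- Let a : ℝ → ℝ be L-Lipschitz with a(0) = 0, let s : ℝ → ℝ be measurable, odd, with |s(x)| ≤ S_∞ for all x. Define Ψ(σ, x, m) = m(σ) ∬_{[0,1]²} m(s⋆) m(s⋆⋆) (a(x(s⋆⋆) − x(σ)) + a(x(s⋆⋆) − x(s⋆))) s(x(σ) − x(s⋆)) ds⋆ ds⋆⋆. Suppose m₁, m₂ : [0,1] → ℝ are nonnegative with ∫₀¹ m₁ = ∫₀¹ m₂ = 1, and x : [0,1] → ℝ is measurable with sup|x| ≤ X̄. Then ∫₀¹ |Ψ(σ, x, m₁) − Ψ(σ, x, m₂)| dσ ≤ 12 L S_∞ X̄ ‖m₁ − m₂‖_{L¹([0,1])}. -/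
/-!
Write `Ψ(σ, m) = m(σ) A_m(σ)` with `A_m(σ) = B_σ(m, m)`, where
`B_σ(f, g) = ∬ f(s⋆) g(s⋆⋆) K_σ(s⋆, s⋆⋆)` is the bilinear form of a kernel bounded by
`C := 4 L S_∞ X̄` (each argument of `a` is at most `2 X̄`). Then `|B_σ(f, g)| ≤ C ‖f‖₁ ‖g‖₁`, so
`|A_m| ≤ C` for probability densities, and `m₁ ⊗ m₁ - m₂ ⊗ m₂ = (m₁ - m₂) ⊗ m₁ + m₂ ⊗ (m₁ - m₂)`
gives `|A_{m₁} - A_{m₂}| ≤ 2 C δ`, `δ = ‖m₁ - m₂‖₁`. Finally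
`m₁ A_{m₁} - m₂ A_{m₂} = (m₁ - m₂) A_{m₁} + m₂ (A_{m₁} - A_{m₂})` has `L¹` norm at most `3 C δ`.
-/

open MeasureTheory Function

theorem integral_abs_mul_sub_mul_le {α : Type*} [MeasurableSpace α] {μ : Measure α}
    {m₁ m₂ A₁ A₂ : α → ℝ} {C D : ℝ} (hm₁ : Integrable m₁ μ) (hm₂ : Integrable m₂ μ)
    (hA₁ : ∀ᵐ σ ∂μ, |A₁ σ| ≤ C) (hA : ∀ᵐ σ ∂μ, |A₁ σ - A₂ σ| ≤ D) :
    ∫ σ, |m₁ σ * A₁ σ - m₂ σ * A₂ σ| ∂μ ≤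
      C * (∫ σ, |m₁ σ - m₂ σ| ∂μ) + D * ∫ σ, |m₂ σ| ∂μ := by
  have hΔ : Integrable (fun σ => |m₁ σ - m₂ σ|) μ := (hm₁.sub hm₂).abs
  rw [← integral_const_mul, ← integral_const_mul,
    ← integral_add (hΔ.const_mul C) (hm₂.abs.const_mul D)]
  refine integral_mono_of_nonneg (ae_of_all _ fun _ => abs_nonneg _)
    ((hΔ.const_mul C).add (hm₂.abs.const_mul D)) ?_
  filter_upwards [hA₁, hA] with σ h₁ h
  calc |m₁ σ * A₁ σ - m₂ σ * A₂ σ| = |(m₁ σ - m₂ σ) * A₁ σ + m₂ σ * (A₁ σ - A₂ σ)| := by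
        ring_nf
    _ ≤ |m₁ σ - m₂ σ| * |A₁ σ| + |m₂ σ| * |A₁ σ - A₂ σ| := by
        rw [← abs_mul, ← abs_mul]; exact abs_add_le _ _
    _ ≤ C * |m₁ σ - m₂ σ| + D * |m₂ σ| := by
        nlinarith [abs_nonneg (m₁ σ - m₂ σ), abs_nonneg (m₂ σ)]

section KernelForm

variable {α β : Type*} [MeasurableSpace α] [MeasurableSpace β] {μ : Measure α} {ν : Measure β}

noncomputable def kernelForm (μ : Measure α) (ν : Measure β) (K : α → β → ℝ)
    (f : α → ℝ) (g : β → ℝ) : ℝ :=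
  ∫ p, f p.1 * g p.2 * K p.1 p.2 ∂μ.prod ν

variable {K : α → β → ℝ} {C : ℝ} {f : α → ℝ} {g : β → ℝ}

theorem integrable_kernelForm_integrand [SFinite ν] (hf : Integrable f μ) (hg : Integrable g ν)
    (hKm : AEStronglyMeasurable (uncurry K) (μ.prod ν))
    (hK : ∀ᵐ p ∂μ.prod ν, |K p.1 p.2| ≤ C) :
    Integrable (fun p => f p.1 * g p.2 * K p.1 p.2) (μ.prod ν) := by
  refine Integrable.mono' ((hf.mul_prod hg).norm.mul_const C)
    ((hf.mul_prod hg).aestronglyMeasurable.mul hKm) ?_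
  filter_upwards [hK] with p hp
  rw [norm_mul]
  exact mul_le_mul_of_nonneg_left hp (norm_nonneg _)

theorem abs_kernelForm_le [SFinite μ] [SFinite ν] (hf : Integrable f μ) (hg : Integrable g ν)
    (hK : ∀ᵐ p ∂μ.prod ν, |K p.1 p.2| ≤ C) :
    |kernelForm μ ν K f g| ≤ C * (∫ x, |f x| ∂μ) * ∫ y, |g y| ∂ν := by
  have hbound :
      ∫ p, |f p.1| * |g p.2| * C ∂μ.prod ν = C * (∫ x, |f x| ∂μ) * ∫ y, |g y| ∂ν := by
    rw [integral_mul_const, integral_prod_mul (fun x => |f x|) (fun y => |g y|)]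
    ring
  rw [← hbound, ← Real.norm_eq_abs]
  refine norm_integral_le_of_norm_le ((hf.abs.mul_prod hg.abs).mul_const C) ?_
  filter_upwards [hK] with p hp
  rw [norm_mul, norm_mul, Real.norm_eq_abs, Real.norm_eq_abs]
  exact mul_le_mul_of_nonneg_left hp (by positivity)

section Quadratic

variable [SFinite μ] {K : α → α → ℝ} {f₁ f₂ : α → ℝ}

theorem kernelForm_self_sub_kernelForm_self (h₁ : Integrable f₁ μ) (h₂ : Integrable f₂ μ)
    (hKm : AEStronglyMeasurable (uncurry K) (μ.prod μ))
    (hK : ∀ᵐ p ∂μ.prod μ, |K p.1 p.2| ≤ C) :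
    kernelForm μ μ K f₁ f₁ - kernelForm μ μ K f₂ f₂ =
      kernelForm μ μ K (f₁ - f₂) f₁ + kernelForm μ μ K f₂ (f₁ - f₂) := by
  have hint {f g : α → ℝ} (hf : Integrable f μ) (hg : Integrable g μ) :=
    integrable_kernelForm_integrand hf hg hKm hK
  unfold kernelForm
  rw [← integral_sub (hint h₁ h₁) (hint h₂ h₂),
    ← integral_add (hint (h₁.sub h₂) h₁) (hint h₂ (h₁.sub h₂))]
  congr 1 with p
  simp only [Pi.sub_apply]
  ring

theorem abs_kernelForm_self_sub_kernelForm_self_le (h₁ : Integrable f₁ μ)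
    (h₂ : Integrable f₂ μ) (hKm : AEStronglyMeasurable (uncurry K) (μ.prod μ))
    (hK : ∀ᵐ p ∂μ.prod μ, |K p.1 p.2| ≤ C) :
    |kernelForm μ μ K f₁ f₁ - kernelForm μ μ K f₂ f₂| ≤
      C * (∫ x, |f₁ x - f₂ x| ∂μ) * ((∫ x, |f₁ x| ∂μ) + ∫ x, |f₂ x| ∂μ) := by
  rw [kernelForm_self_sub_kernelForm_self h₁ h₂ hKm hK]
  calc _ ≤ |kernelForm μ μ K (f₁ - f₂) f₁| + |kernelForm μ μ K f₂ (f₁ - f₂)| := abs_add_le _ _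
    _ ≤ C * (∫ x, |f₁ x - f₂ x| ∂μ) * (∫ x, |f₁ x| ∂μ)
        + C * (∫ x, |f₂ x| ∂μ) * (∫ x, |f₁ x - f₂ x| ∂μ) :=
      add_le_add (abs_kernelForm_le (h₁.sub h₂) h₁ hK) (abs_kernelForm_le h₂ (h₁.sub h₂) hK)
    _ = _ := by ring

theorem integral_abs_mul_kernelForm_sub_le {K : α → α → α → ℝ} {m₁ m₂ : α → ℝ}
    (h₁ : Integrable m₁ μ) (h₂ : Integrable m₂ μ) (h₁n : 0 ≤ᵐ[μ] m₁) (h₂n : 0 ≤ᵐ[μ] m₂)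
    (h₁m : ∫ σ, m₁ σ ∂μ = 1) (h₂m : ∫ σ, m₂ σ ∂μ = 1)
    (hKm : ∀ᵐ σ ∂μ, AEStronglyMeasurable (uncurry (K σ)) (μ.prod μ))
    (hK : ∀ᵐ σ ∂μ, ∀ᵐ p ∂μ.prod μ, |K σ p.1 p.2| ≤ C) :
    ∫ σ, |m₁ σ * kernelForm μ μ (K σ) m₁ m₁ - m₂ σ * kernelForm μ μ (K σ) m₂ m₂| ∂μ ≤
      3 * C * ∫ σ, |m₁ σ - m₂ σ| ∂μ := by
  have hnorm {m : α → ℝ} (hmn : 0 ≤ᵐ[μ] m) (hmm : ∫ σ, m σ ∂μ = 1) : ∫ σ, |m σ| ∂μ = 1 :=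
    hmm ▸ integral_congr_ae (hmn.mono fun _ hσ => abs_of_nonneg hσ)
  have hA₁ : ∀ᵐ σ ∂μ, |kernelForm μ μ (K σ) m₁ m₁| ≤ C := by
    filter_upwards [hK] with σ hσ
    refine (abs_kernelForm_le h₁ h₁ hσ).trans_eq ?_
    rw [hnorm h₁n h₁m]
    ring
  have hA : ∀ᵐ σ ∂μ, |kernelForm μ μ (K σ) m₁ m₁ - kernelForm μ μ (K σ) m₂ m₂| ≤
      2 * C * ∫ σ, |m₁ σ - m₂ σ| ∂μ := by
    filter_upwards [hKm, hK] with σ hσm hσ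
    refine (abs_kernelForm_self_sub_kernelForm_self_le h₁ h₂ hσm hσ).trans_eq ?_
    rw [hnorm h₁n h₁m, hnorm h₂n h₂m]
    ring
  refine (integral_abs_mul_sub_mul_le h₁ h₂ hA₁ hA).trans_eq ?_
  rw [hnorm h₂n h₂m]
  ring

end Quadratic

end KernelForm

theorem abs_interaction_le {L X S : ℝ} (hL : 0 ≤ L) {a : ℝ → ℝ}
    (ha : LipschitzWith (Real.toNNReal L) a) (ha0 : a 0 = 0) {s : ℝ → ℝ}
    (hs : ∀ y, |s y| ≤ S) {u v w : ℝ} (hu : |u| ≤ X) (hv : |v| ≤ X) (hw : |w| ≤ X) :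
    |(a (u - w) + a (u - v)) * s (w - v)| ≤ 4 * L * S * X := by
  have ha_le (y : ℝ) : |a y| ≤ L * |y| := by
    simpa [Real.coe_toNNReal L hL] using ha.norm_le_mul ha0 y
  have huw := ha_le (u - w)
  have huv := ha_le (u - v)
  have h₁ : |u - w| ≤ 2 * X := (abs_sub _ _).trans (by linarith)
  have h₂ : |u - v| ≤ 2 * X := (abs_sub _ _).trans (by linarith)
  have hsum : |a (u - w) + a (u - v)| ≤ 4 * L * X := by
    nlinarith [abs_add_le (a (u - w)) (a (u - v))]
  rw [abs_mul]
  nlinarith [hs (w - v), abs_nonneg (s (w - v)), abs_nonneg (a (u - w) + a (u - v))]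

theorem Psi_L1_stability_in_m_general (L Sinf Xb : ℝ) (hL : 0 ≤ L)
    (a : ℝ → ℝ) (ha : LipschitzWith (Real.toNNReal L) a) (ha0 : a 0 = 0)
    (s : ℝ → ℝ) (hs_meas : Measurable s)
    (hs_bdd : ∀ y, |s y| ≤ Sinf)
    (x : ℝ → ℝ) (hx_meas : Measurable x)
    (hx_bdd : ∀ σ ∈ Set.Icc (0:ℝ) 1, |x σ| ≤ Xb)
    (m₁ m₂ : ℝ → ℝ)
    (hm₁ : IntegrableOn m₁ (Set.Icc 0 1)) (hm₂ : IntegrableOn m₂ (Set.Icc 0 1))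
    (hm₁n : ∀ σ ∈ Set.Icc (0:ℝ) 1, 0 ≤ m₁ σ)
    (hm₂n : ∀ σ ∈ Set.Icc (0:ℝ) 1, 0 ≤ m₂ σ)
    (hm₁m : ∫ σ in Set.Icc (0:ℝ) 1, m₁ σ = 1)
    (hm₂m : ∫ σ in Set.Icc (0:ℝ) 1, m₂ σ = 1)
    (Ψ : (ℝ → ℝ) → (ℝ → ℝ) → ℝ → ℝ)
    (hΨ : ∀ X m σ, Ψ X m σ = m σ * ∫ sa in Set.Icc (0:ℝ) 1,
      ∫ sb in Set.Icc (0:ℝ) 1,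
        m sa * m sb * ((a (X sb - X σ) + a (X sb - X sa)) * s (X σ - X sa))) :
    ∫ σ in Set.Icc (0:ℝ) 1, |Ψ x m₁ σ - Ψ x m₂ σ|
      ≤ 12 * L * Sinf * Xb * ∫ σ in Set.Icc (0:ℝ) 1, |m₁ σ - m₂ σ| := by
  set μ := volume.restrict (Set.Icc (0:ℝ) 1)
  set K : ℝ → ℝ → ℝ → ℝ := fun σ sa sb => (a (x sb - x σ) + a (x sb - x sa)) * s (x σ - x sa)
  have hIcc : ∀ᵐ σ ∂μ, σ ∈ Set.Icc (0:ℝ) 1 := ae_restrict_mem measurableSet_Icc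
  have hKm (σ : ℝ) : AEStronglyMeasurable (uncurry (K σ)) (μ.prod μ) := by
    have ha_meas := ha.continuous.measurable
    exact Measurable.aestronglyMeasurable (by fun_prop)
  have hK : ∀ᵐ σ ∂μ, ∀ᵐ p ∂μ.prod μ, |K σ p.1 p.2| ≤ 4 * L * Sinf * Xb := by
    have hIcc₂ : ∀ᵐ p ∂μ.prod μ, p ∈ Set.Icc (0:ℝ) 1 ×ˢ Set.Icc (0:ℝ) 1 := by
      rw [Measure.prod_restrict]
      exact ae_restrict_mem (measurableSet_Icc.prod measurableSet_Icc)
    filter_upwards [hIcc] with σ hσ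
    filter_upwards [hIcc₂] with p hp
    exact abs_interaction_le hL ha ha0 hs_bdd (hx_bdd _ hp.2) (hx_bdd _ hp.1) (hx_bdd σ hσ)
  have hΨK {m : ℝ → ℝ} (hm : Integrable m μ) :
      ∀ᵐ σ ∂μ, Ψ x m σ = m σ * kernelForm μ μ (K σ) m m := by
    filter_upwards [hK] with σ hσ
    rw [hΨ, kernelForm]
    congr 1
    exact integral_integral (f := fun sa sb => m sa * m sb * K σ sa sb)
      (integrable_kernelForm_integrand hm hm (hKm σ) hσ)
  calc ∫ σ, |Ψ x m₁ σ - Ψ x m₂ σ| ∂μ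
      = ∫ σ, |m₁ σ * kernelForm μ μ (K σ) m₁ m₁ - m₂ σ * kernelForm μ μ (K σ) m₂ m₂| ∂μ := by
        refine integral_congr_ae ?_
        filter_upwards [hΨK hm₁, hΨK hm₂] with σ h₁ h₂
        rw [h₁, h₂]
    _ ≤ 3 * (4 * L * Sinf * Xb) * ∫ σ, |m₁ σ - m₂ σ| ∂μ :=
        integral_abs_mul_kernelForm_sub_le hm₁ hm₂ (hIcc.mono hm₁n) (hIcc.mono hm₂n) hm₁m hm₂m
          (ae_of_all _ hKm) hK
    _ = 12 * L * Sinf * Xb * ∫ σ, |m₁ σ - m₂ σ| ∂μ := by ring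

theorem Psi_L1_stability_in_m (L Sinf Xb : ℝ) (hL : 0 ≤ L) (hS : 0 ≤ Sinf)
    (hX : 0 ≤ Xb)
    (a : ℝ → ℝ) (ha : LipschitzWith (Real.toNNReal L) a) (ha0 : a 0 = 0)
    (s : ℝ → ℝ) (hs_meas : Measurable s) (hs_odd : ∀ y, s (-y) = -s y)
    (hs_bdd : ∀ y, |s y| ≤ Sinf)
    (x : ℝ → ℝ) (hx_meas : Measurable x)
    (hx_bdd : ∀ σ ∈ Set.Icc (0:ℝ) 1, |x σ| ≤ Xb)
    (m₁ m₂ : ℝ → ℝ)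
    (hm₁ : IntegrableOn m₁ (Set.Icc 0 1)) (hm₂ : IntegrableOn m₂ (Set.Icc 0 1))
    (hm₁n : ∀ σ ∈ Set.Icc (0:ℝ) 1, 0 ≤ m₁ σ)
    (hm₂n : ∀ σ ∈ Set.Icc (0:ℝ) 1, 0 ≤ m₂ σ)
    (hm₁m : ∫ σ in Set.Icc (0:ℝ) 1, m₁ σ = 1)
    (hm₂m : ∫ σ in Set.Icc (0:ℝ) 1, m₂ σ = 1)
    (Ψ : (ℝ → ℝ) → (ℝ → ℝ) → ℝ → ℝ)
    (hΨ : ∀ X m σ, Ψ X m σ = m σ * ∫ sa in Set.Icc (0:ℝ) 1,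
      ∫ sb in Set.Icc (0:ℝ) 1,
        m sa * m sb * ((a (X sb - X σ) + a (X sb - X sa)) * s (X σ - X sa))) :
    ∫ σ in Set.Icc (0:ℝ) 1, |Ψ x m₁ σ - Ψ x m₂ σ|
      ≤ 12 * L * Sinf * Xb * ∫ σ in Set.Icc (0:ℝ) 1, |m₁ σ - m₂ σ| :=
  Psi_L1_stability_in_m_general L Sinf Xb hL a ha ha0 s hs_meas hs_bdd x hx_meas hx_bdd m₁ m₂ hm₁
    hm₂ hm₁n hm₂n hm₁m hm₂m Ψ hΨ
end

section
/- Let a : ℝ → ℝ be L-Lipschitz with a(0)=0, and s : ℝ → ℝ odd, bounded by S_∞, with restrictions to (0,∞) and (−∞,0) both S-Lipschitz. Define Ψ as in the pairwise competition model. Suppose m : [0,1] → ℝ is nonnegative with ∫₀¹ m = 1 and ‖m‖_∞ ≤ M̄, and x₁, x₂ : [0,1] → ℝ are continuous strictly increasing functions bounded by X̄. Then ∫₀¹ |Ψ(σ, x₁, m) − Ψ(σ, x₂, m)| dσ ≤ L(3M̄S_∞ + S_∞ + 16SX̄) · sup_{[0,1]} |x₁ − x₂|. -/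
/-!
Write `Ψ(σ, x, m) = m(σ) ∫ m(s) sgn(x σ - x s) A_x(x σ, x s) ds` with
`A_x(c, t) = ∫ m(r) (a(x r - c) + a(x r - t)) dr`, which is `L`-Lipschitz jointly in `x`,
`c` and `t` and bounded by `4 L X̄`. Splitting the difference of the integrands as
`sgn₁ (A₁ - A₂) + (sgn₁ - sgn₂) A₂`, the first term is at most `4 L S∞ δ` with
`δ = sup |x₁ - x₂|`. For the second, monotonicity makes `x₁ σ - x₁ s` and `x₂ σ - x₂ s`
of the same sign, so both lie on the same side of the jump of `sgn`, where it is
`S`-Lipschitz; this gives `8 L S X̄ δ`. Integrating against `m(σ)` yields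
`L (4 S∞ + 8 S X̄) δ`, and `M̄ ≥ ∫ m = 1`.
-/

open MeasureTheory Set
open scoped NNReal

section WeightedAverage

variable {α : Type*} [MeasurableSpace α] {μ : Measure α}

structure IsProbDensity (m : α → ℝ) (μ : Measure α) : Prop where
  integrable : Integrable m μ
  nonneg : 0 ≤ᵐ[μ] m
  integral_eq_one : ∫ t, m t ∂μ = 1

variable {m f g : α → ℝ} {B : ℝ}

lemma IsProbDensity.abs_integral_mul_le (hm : IsProbDensity m μ)
    (hf : ∀ᵐ t ∂μ, |f t| ≤ B) : |∫ t, m t * f t ∂μ| ≤ B :=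
  calc |∫ t, m t * f t ∂μ| ≤ ∫ t, |m t * f t| ∂μ := abs_integral_le_integral_abs
    _ ≤ ∫ t, m t * B ∂μ := by
        refine integral_mono_of_nonneg (ae_of_all _ fun _ => abs_nonneg _)
          (hm.integrable.mul_const B) ?_
        filter_upwards [hm.nonneg, hf] with t hmt hft
        rw [abs_mul, abs_of_nonneg hmt]
        exact mul_le_mul_of_nonneg_left hft hmt
    _ = B := by rw [integral_mul_const, hm.integral_eq_one, one_mul]

lemma IsProbDensity.abs_integral_mul_sub_integral_mul_le (hm : IsProbDensity m μ)
    (hfi : Integrable (fun t => m t * f t) μ) (hgi : Integrable (fun t => m t * g t) μ)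
    (hfg : ∀ᵐ t ∂μ, |f t - g t| ≤ B) :
    |∫ t, m t * f t ∂μ - ∫ t, m t * g t ∂μ| ≤ B := by
  rw [← integral_sub hfi hgi]
  simp_rw [← mul_sub]
  exact hm.abs_integral_mul_le hfg

lemma IsProbDensity.integral_le_of_le_mul (hm : IsProbDensity m μ) (hf : 0 ≤ᵐ[μ] f)
    (hfm : ∀ᵐ t ∂μ, f t ≤ m t * B) : ∫ t, f t ∂μ ≤ B :=
  calc ∫ t, f t ∂μ ≤ ∫ t, m t * B ∂μ :=
        integral_mono_of_nonneg hf (hm.integrable.mul_const B) hfm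
    _ = B := by rw [integral_mul_const, hm.integral_eq_one, one_mul]

lemma IsProbDensity.one_le_of_ae_le [IsProbabilityMeasure μ] (hm : IsProbDensity m μ)
    (hmB : ∀ᵐ t ∂μ, m t ≤ B) : 1 ≤ B := by
  simpa [hm.integral_eq_one] using integral_mono_ae hm.integrable (integrable_const B) hmB

end WeightedAverage

lemma abs_mul_sub_mul_le (a b c d : ℝ) : |a * b - c * d| ≤ |a| * |b - d| + |a - c| * |d| :=
  calc |a * b - c * d| = |a * (b - d) + (a - c) * d| := by congr 1; ring
    _ ≤ |a| * |b - d| + |a - c| * |d| := by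
        rw [← abs_mul, ← abs_mul]; exact abs_add_le _ _

lemma StrictMonoOn.sign_sub_eq {s : Set ℝ} {f : ℝ → ℝ} (hf : StrictMonoOn f s) {u v : ℝ}
    (hu : u ∈ s) (hv : v ∈ s) : SignType.sign (f u - f v) = SignType.sign (u - v) := by
  rcases lt_trichotomy u v with h | rfl | h
  · rw [sign_neg (sub_neg.2 (hf hu hv h)), sign_neg (sub_neg.2 h)]
  · simp
  · rw [sign_pos (sub_pos.2 (hf hv hu h)), sign_pos (sub_pos.2 h)]

section PiecewiseLipschitz

variable {f : ℝ → ℝ} {S : ℝ≥0}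

lemma measurable_of_lipschitzOnWith_Ioi_Iio (hpos : LipschitzOnWith S f (Ioi 0))
    (hneg : LipschitzOnWith S f (Iio 0)) : Measurable f := by
  refine measurable_of_continuousOn_compl_singleton 0 fun y hy => ?_
  rcases (show y ≠ 0 from hy).lt_or_gt with h | h
  · exact (hneg.continuousOn.continuousAt (Iio_mem_nhds h)).continuousWithinAt
  · exact (hpos.continuousOn.continuousAt (Ioi_mem_nhds h)).continuousWithinAt

lemma abs_sub_le_of_sign_eq (hpos : LipschitzOnWith S f (Ioi 0))
    (hneg : LipschitzOnWith S f (Iio 0)) {u v : ℝ}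
    (huv : SignType.sign u = SignType.sign v) : |f u - f v| ≤ S * |u - v| := by
  rcases lt_trichotomy u 0 with hu | rfl | hu
  · have hv : v < 0 := sign_eq_neg_one_iff.1 (huv ▸ sign_neg hu)
    simpa [Real.dist_eq] using hneg.dist_le_mul u hu v hv
  · obtain rfl : v = 0 := sign_eq_zero_iff.1 (by simpa using huv.symm)
    simp
  · have hv : 0 < v := sign_eq_one_iff.1 (huv ▸ sign_pos hu)
    simpa [Real.dist_eq] using hpos.dist_le_mul u hu v hv

end PiecewiseLipschitz

lemma le_ciSup_of_continuousOn {β : Type*} [TopologicalSpace β] {s : Set β} {f : β → ℝ}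
    (hs : IsCompact s) (hf : ContinuousOn f s) {t : β} (ht : t ∈ s) : f t ≤ ⨆ σ : s, f σ := by
  have hbdd := hs.bddAbove_image hf
  rw [image_eq_range] at hbdd
  exact le_ciSup hbdd ⟨t, ht⟩

section Competition

variable {α : Type*} [MeasurableSpace α] {μ : Measure α} {m : α → ℝ} {a sgn : ℝ → ℝ}
  {K S : ℝ≥0} {x y : α → ℝ} {X T Sinf : ℝ}

noncomputable def interactionKernel (μ : Measure α) (m : α → ℝ) (a : ℝ → ℝ) (x : α → ℝ)
    (c t : ℝ) : ℝ :=
  ∫ s, m s * (a (x s - c) + a (x s - t)) ∂μ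

/-- `Ψ(σ, x, m) = m σ * competitionField μ m a sgn x (x σ)` for `μ` the Lebesgue measure
on `[0, 1]`. -/
noncomputable def competitionField (μ : Measure α) (m : α → ℝ) (a sgn : ℝ → ℝ) (x : α → ℝ)
    (c : ℝ) : ℝ :=
  ∫ s, m s * (sgn (c - x s) * interactionKernel μ m a x c (x s)) ∂μ

lemma integral_integral_eq_competitionField (c : ℝ) :
    ∫ s, ∫ r, m s * m r * ((a (x r - c) + a (x r - x s)) * sgn (c - x s)) ∂μ ∂μ =
      competitionField μ m a sgn x c := by
  refine integral_congr_ae (ae_of_all _ fun s => ?_)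
  simp only [interactionKernel, ← integral_const_mul]
  congr 1 with r
  ring

lemma abs_interaction_sub_le (ha : LipschitzWith K a) (p q c c' t t' : ℝ) :
    |(a (p - c) + a (p - t)) - (a (q - c') + a (q - t'))| ≤
      K * (2 * |p - q| + |c - c'| + |t - t'|) := by
  have hlip (u v : ℝ) : |a u - a v| ≤ K * |u - v| := by
    simpa [Real.dist_eq] using ha.dist_le_mul u v
  have h₁ := hlip (p - c) (q - c')
  have h₂ := hlip (p - t) (q - t')
  have h₃ : |p - c - (q - c')| ≤ |p - q| + |c - c'| := by
    rw [show p - c - (q - c') = (p - q) - (c - c') by ring]; exact abs_sub _ _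
  have h₄ : |p - t - (q - t')| ≤ |p - q| + |t - t'| := by
    rw [show p - t - (q - t') = (p - q) - (t - t') by ring]; exact abs_sub _ _
  calc |(a (p - c) + a (p - t)) - (a (q - c') + a (q - t'))|
      ≤ |a (p - c) - a (q - c')| + |a (p - t) - a (q - t')| := by
        rw [show ∀ u v w z : ℝ, (u + v) - (w + z) = (u - w) + (v - z) by intros; ring]
        exact abs_add_le _ _
    _ ≤ K * (|p - q| + |c - c'|) + K * (|p - q| + |t - t'|) := by
        gcongr
        · exact h₁.trans (by gcongr)
        · exact h₂.trans (by gcongr)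
    _ = K * (2 * |p - q| + |c - c'| + |t - t'|) := by ring

lemma abs_interaction_le_s6 (ha : LipschitzWith K a) (ha0 : a 0 = 0) (p c t : ℝ) :
    |a (p - c) + a (p - t)| ≤ K * (2 * |p| + |c| + |t|) := by
  simpa [ha0] using abs_interaction_sub_le ha p 0 c 0 t 0

lemma integrable_mul_interaction (hm : Integrable m μ) (ha : LipschitzWith K a) (ha0 : a 0 = 0)
    (hx : AEStronglyMeasurable x μ) (hxX : ∀ᵐ s ∂μ, |x s| ≤ X) (c t : ℝ) :
    Integrable (fun s => m s * (a (x s - c) + a (x s - t))) μ := by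
  refine hm.mul_bdd ((ha.continuous.comp_aestronglyMeasurable
    (hx.sub aestronglyMeasurable_const)).add (ha.continuous.comp_aestronglyMeasurable
    (hx.sub aestronglyMeasurable_const))) (c := K * (2 * X + |c| + |t|)) ?_
  filter_upwards [hxX] with s hs
  refine (abs_interaction_le_s6 ha ha0 (x s) c t).trans ?_
  gcongr

lemma abs_interactionKernel_le (hm : IsProbDensity m μ) (ha : LipschitzWith K a)
    (ha0 : a 0 = 0) (hxX : ∀ᵐ s ∂μ, |x s| ≤ X) (c t : ℝ) :
    |interactionKernel μ m a x c t| ≤ K * (2 * X + |c| + |t|) := by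
  refine hm.abs_integral_mul_le ?_
  filter_upwards [hxX] with s hs
  refine (abs_interaction_le_s6 ha ha0 (x s) c t).trans ?_
  gcongr

lemma abs_interactionKernel_sub_le (hm : IsProbDensity m μ) (ha : LipschitzWith K a)
    (ha0 : a 0 = 0) (hx : AEStronglyMeasurable x μ) (hy : AEStronglyMeasurable y μ)
    (hxX : ∀ᵐ s ∂μ, |x s| ≤ X) (hyX : ∀ᵐ s ∂μ, |y s| ≤ X) (hxy : ∀ᵐ s ∂μ, |x s - y s| ≤ T)
    (c t c' t' : ℝ) :
    |interactionKernel μ m a x c t - interactionKernel μ m a y c' t'| ≤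
      K * (2 * T + |c - c'| + |t - t'|) := by
  refine hm.abs_integral_mul_sub_integral_mul_le
    (integrable_mul_interaction hm.integrable ha ha0 hx hxX c t)
    (integrable_mul_interaction hm.integrable ha ha0 hy hyX c' t') ?_
  filter_upwards [hxy] with s hs
  refine (abs_interaction_sub_le ha (x s) (y s) c c' t t').trans ?_
  gcongr

lemma lipschitzWith_interactionKernel (hm : IsProbDensity m μ) (ha : LipschitzWith K a)
    (ha0 : a 0 = 0) (hx : AEStronglyMeasurable x μ) (hxX : ∀ᵐ s ∂μ, |x s| ≤ X) (c : ℝ) :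
    LipschitzWith K (interactionKernel μ m a x c) :=
  LipschitzWith.of_dist_le_mul fun t t' => by
    simpa [Real.dist_eq] using abs_interactionKernel_sub_le hm ha ha0 hx hx hxX hxX
      (T := 0) (ae_of_all _ fun s => by simp) c t c t'

lemma integrable_mul_competitionIntegrand (hm : IsProbDensity m μ) (ha : LipschitzWith K a)
    (ha0 : a 0 = 0) (hsgn : Measurable sgn) (hsgnb : ∀ y, |sgn y| ≤ Sinf)
    (hx : AEStronglyMeasurable x μ) (hxX : ∀ᵐ s ∂μ, |x s| ≤ X) (c : ℝ) :
    Integrable (fun s => m s * (sgn (c - x s) * interactionKernel μ m a x c (x s))) μ := by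
  refine hm.integrable.mul_bdd ((hsgn.comp_aemeasurable
    (aemeasurable_const.sub hx.aemeasurable)).aestronglyMeasurable.mul
    ((lipschitzWith_interactionKernel hm ha ha0 hx hxX c).continuous.comp_aestronglyMeasurable
    hx)) (c := Sinf * (K * (2 * X + |c| + X))) ?_
  filter_upwards [hxX] with s hs
  rw [Real.norm_eq_abs, abs_mul]
  gcongr
  · exact (abs_nonneg _).trans (hsgnb 0)
  · exact hsgnb _
  · exact (abs_interactionKernel_le hm ha ha0 hxX c (x s)).trans (by gcongr)

lemma abs_competitionField_sub_le {x₁ x₂ : α → ℝ} {c₁ c₂ : ℝ} (hm : IsProbDensity m μ)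
    (ha : LipschitzWith K a) (ha0 : a 0 = 0) (hpos : LipschitzOnWith S sgn (Ioi 0))
    (hneg : LipschitzOnWith S sgn (Iio 0)) (hsgnb : ∀ y, |sgn y| ≤ Sinf)
    (hx₁ : AEStronglyMeasurable x₁ μ) (hx₂ : AEStronglyMeasurable x₂ μ)
    (hx₁X : ∀ᵐ s ∂μ, |x₁ s| ≤ X) (hx₂X : ∀ᵐ s ∂μ, |x₂ s| ≤ X) (hc₂X : |c₂| ≤ X)
    (hx₁₂ : ∀ᵐ s ∂μ, |x₁ s - x₂ s| ≤ T) (hc₁₂ : |c₁ - c₂| ≤ T)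
    (hsign : ∀ᵐ s ∂μ, SignType.sign (c₁ - x₁ s) = SignType.sign (c₂ - x₂ s)) :
    |competitionField μ m a sgn x₁ c₁ - competitionField μ m a sgn x₂ c₂| ≤
      K * (4 * Sinf + 8 * S * X) * T := by
  have hsgn := measurable_of_lipschitzOnWith_Ioi_Iio hpos hneg
  refine hm.abs_integral_mul_sub_integral_mul_le
    (integrable_mul_competitionIntegrand hm ha ha0 hsgn hsgnb hx₁ hx₁X c₁)
    (integrable_mul_competitionIntegrand hm ha ha0 hsgn hsgnb hx₂ hx₂X c₂) ?_
  filter_upwards [hx₂X, hx₁₂, hsign] with s hs₂ hs₁₂ hs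
  have hkernel :=
    abs_interactionKernel_sub_le hm ha ha0 hx₁ hx₂ hx₁X hx₂X hx₁₂ c₁ (x₁ s) c₂ (x₂ s)
  have hbound := abs_interactionKernel_le hm ha ha0 hx₂X c₂ (x₂ s)
  have hsgn_sub : |sgn (c₁ - x₁ s) - sgn (c₂ - x₂ s)| ≤ S * (2 * T) := by
    refine (abs_sub_le_of_sign_eq hpos hneg hs).trans ?_
    rw [show c₁ - x₁ s - (c₂ - x₂ s) = (c₁ - c₂) - (x₁ s - x₂ s) by ring]
    gcongr
    linarith [abs_sub (c₁ - c₂) (x₁ s - x₂ s)]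
  have hSinf : 0 ≤ Sinf := (abs_nonneg _).trans (hsgnb 0)
  have hT : 0 ≤ T := (abs_nonneg _).trans hc₁₂
  calc |sgn (c₁ - x₁ s) * interactionKernel μ m a x₁ c₁ (x₁ s) -
        sgn (c₂ - x₂ s) * interactionKernel μ m a x₂ c₂ (x₂ s)|
      ≤ |sgn (c₁ - x₁ s)| * |interactionKernel μ m a x₁ c₁ (x₁ s) -
          interactionKernel μ m a x₂ c₂ (x₂ s)| +
        |sgn (c₁ - x₁ s) - sgn (c₂ - x₂ s)| * |interactionKernel μ m a x₂ c₂ (x₂ s)| :=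
        abs_mul_sub_mul_le _ _ _ _
    _ ≤ Sinf * (K * (2 * T + T + T)) + S * (2 * T) * (K * (2 * X + X + X)) := by
        gcongr
        · exact hsgnb _
        · exact hkernel.trans (by gcongr)
        · exact hbound.trans (by gcongr)
    _ = K * (4 * Sinf + 8 * S * X) * T := by ring

end Competition

theorem Psi_stability_in_x_general (L Sinf S Mb Xb : ℝ) (hL : 0 ≤ L) (hSinf : 0 ≤ Sinf)
    (hS : 0 ≤ S) (hXb : 0 ≤ Xb)
    (a : ℝ → ℝ) (ha : LipschitzWith (Real.toNNReal L) a) (ha0 : a 0 = 0)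
    (sgn : ℝ → ℝ)
    (hs_bdd : ∀ y, |sgn y| ≤ Sinf)
    (hs_lip_pos : ∀ y₁ ∈ Set.Ioi (0:ℝ), ∀ y₂ ∈ Set.Ioi (0:ℝ),
      |sgn y₁ - sgn y₂| ≤ S * |y₁ - y₂|)
    (hs_lip_neg : ∀ y₁ ∈ Set.Iio (0:ℝ), ∀ y₂ ∈ Set.Iio (0:ℝ),
      |sgn y₁ - sgn y₂| ≤ S * |y₁ - y₂|)
    (m : ℝ → ℝ) (hm : IntegrableOn m (Set.Icc 0 1))
    (hmn : ∀ σ ∈ Set.Icc (0:ℝ) 1, 0 ≤ m σ)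
    (hmm : ∫ σ in Set.Icc (0:ℝ) 1, m σ = 1)
    (hmb : ∀ σ ∈ Set.Icc (0:ℝ) 1, m σ ≤ Mb)
    (x₁ x₂ : ℝ → ℝ)
    (hx₁c : ContinuousOn x₁ (Set.Icc 0 1)) (hx₂c : ContinuousOn x₂ (Set.Icc 0 1))
    (hx₁mono : StrictMonoOn x₁ (Set.Icc 0 1)) (hx₂mono : StrictMonoOn x₂ (Set.Icc 0 1))
    (hx₁b : ∀ σ ∈ Set.Icc (0:ℝ) 1, |x₁ σ| ≤ Xb)
    (hx₂b : ∀ σ ∈ Set.Icc (0:ℝ) 1, |x₂ σ| ≤ Xb)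
    (Ψ : (ℝ → ℝ) → (ℝ → ℝ) → ℝ → ℝ)
    (hΨ : ∀ X M σ, Ψ X M σ = M σ * ∫ sa in Set.Icc (0:ℝ) 1,
      ∫ sb in Set.Icc (0:ℝ) 1,
        M sa * M sb * ((a (X sb - X σ) + a (X sb - X sa)) * sgn (X σ - X sa))) :
    ∫ σ in Set.Icc (0:ℝ) 1, |Ψ x₁ m σ - Ψ x₂ m σ|
      ≤ L * (3 * Mb * Sinf + Sinf + 16 * S * Xb) *
        (⨆ σ : Set.Icc (0:ℝ) 1, |x₁ σ - x₂ σ|) := by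
  set μ := volume.restrict (Icc (0:ℝ) 1)
  have hae {p : ℝ → Prop} (h : ∀ σ ∈ Icc (0:ℝ) 1, p σ) : ∀ᵐ σ ∂μ, p σ :=
    ae_restrict_of_forall_mem measurableSet_Icc h
  have : IsProbabilityMeasure μ := ⟨by simp [μ]⟩
  have hdens : IsProbDensity m μ := ⟨hm, hae hmn, hmm⟩
  have hpos : LipschitzOnWith (Real.toNNReal S) sgn (Ioi 0) :=
    LipschitzOnWith.of_dist_le' (by simpa [Real.dist_eq] using hs_lip_pos)
  have hneg : LipschitzOnWith (Real.toNNReal S) sgn (Iio 0) :=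
    LipschitzOnWith.of_dist_le' (by simpa [Real.dist_eq] using hs_lip_neg)
  set T := ⨆ σ : Icc (0:ℝ) 1, |x₁ σ - x₂ σ|
  have hT (σ : ℝ) (hσ : σ ∈ Icc (0:ℝ) 1) : |x₁ σ - x₂ σ| ≤ T :=
    le_ciSup_of_continuousOn isCompact_Icc (hx₁c.sub hx₂c).abs hσ
  have hpointwise (σ : ℝ) (hσ : σ ∈ Icc (0:ℝ) 1) :
      |Ψ x₁ m σ - Ψ x₂ m σ| ≤ m σ * (L * (4 * Sinf + 8 * S * Xb) * T) := by
    rw [hΨ x₁ m σ, hΨ x₂ m σ, integral_integral_eq_competitionField,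
      integral_integral_eq_competitionField, ← mul_sub, abs_mul, abs_of_nonneg (hmn σ hσ)]
    gcongr
    · exact hmn σ hσ
    · simpa [Real.coe_toNNReal _ hL, Real.coe_toNNReal _ hS] using
        abs_competitionField_sub_le hdens ha ha0 hpos hneg hs_bdd
          (hx₁c.aestronglyMeasurable measurableSet_Icc)
          (hx₂c.aestronglyMeasurable measurableSet_Icc) (hae hx₁b) (hae hx₂b) (hx₂b σ hσ)
          (hae hT) (hT σ hσ) (hae fun s hs => by
            rw [hx₁mono.sign_sub_eq hσ hs, hx₂mono.sign_sub_eq hσ hs])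
  have hMb : 1 ≤ Mb := hdens.one_le_of_ae_le (hae hmb)
  have hT0 : 0 ≤ T := (abs_nonneg _).trans (hT 0 (left_mem_Icc.2 zero_le_one))
  calc ∫ σ in Icc (0:ℝ) 1, |Ψ x₁ m σ - Ψ x₂ m σ|
      ≤ L * (4 * Sinf + 8 * S * Xb) * T :=
        hdens.integral_le_of_le_mul (ae_of_all _ fun _ => abs_nonneg _) (hae hpointwise)
    _ ≤ L * (3 * Mb * Sinf + Sinf + 16 * S * Xb) * T := by
        gcongr L * ?_ * _
        nlinarith [mul_le_mul_of_nonneg_left hMb hSinf, mul_nonneg hS hXb]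

theorem Psi_stability_in_x (L Sinf S Mb Xb : ℝ) (hL : 0 ≤ L) (hSinf : 0 ≤ Sinf)
    (hS : 0 ≤ S) (hMb : 0 ≤ Mb) (hXb : 0 ≤ Xb)
    (a : ℝ → ℝ) (ha : LipschitzWith (Real.toNNReal L) a) (ha0 : a 0 = 0)
    (sgn : ℝ → ℝ) (hs_odd : ∀ y, sgn (-y) = -sgn y)
    (hs_bdd : ∀ y, |sgn y| ≤ Sinf)
    (hs_lip_pos : ∀ y₁ ∈ Set.Ioi (0:ℝ), ∀ y₂ ∈ Set.Ioi (0:ℝ),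
      |sgn y₁ - sgn y₂| ≤ S * |y₁ - y₂|)
    (hs_lip_neg : ∀ y₁ ∈ Set.Iio (0:ℝ), ∀ y₂ ∈ Set.Iio (0:ℝ),
      |sgn y₁ - sgn y₂| ≤ S * |y₁ - y₂|)
    (m : ℝ → ℝ) (hm : IntegrableOn m (Set.Icc 0 1))
    (hmn : ∀ σ ∈ Set.Icc (0:ℝ) 1, 0 ≤ m σ)
    (hmm : ∫ σ in Set.Icc (0:ℝ) 1, m σ = 1)
    (hmb : ∀ σ ∈ Set.Icc (0:ℝ) 1, m σ ≤ Mb)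
    (x₁ x₂ : ℝ → ℝ)
    (hx₁c : ContinuousOn x₁ (Set.Icc 0 1)) (hx₂c : ContinuousOn x₂ (Set.Icc 0 1))
    (hx₁mono : StrictMonoOn x₁ (Set.Icc 0 1)) (hx₂mono : StrictMonoOn x₂ (Set.Icc 0 1))
    (hx₁b : ∀ σ ∈ Set.Icc (0:ℝ) 1, |x₁ σ| ≤ Xb)
    (hx₂b : ∀ σ ∈ Set.Icc (0:ℝ) 1, |x₂ σ| ≤ Xb)
    (Ψ : (ℝ → ℝ) → (ℝ → ℝ) → ℝ → ℝ)
    (hΨ : ∀ X M σ, Ψ X M σ = M σ * ∫ sa in Set.Icc (0:ℝ) 1,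
      ∫ sb in Set.Icc (0:ℝ) 1,
        M sa * M sb * ((a (X sb - X σ) + a (X sb - X sa)) * sgn (X σ - X sa))) :
    ∫ σ in Set.Icc (0:ℝ) 1, |Ψ x₁ m σ - Ψ x₂ m σ|
      ≤ L * (3 * Mb * Sinf + Sinf + 16 * S * Xb) *
        (⨆ σ : Set.Icc (0:ℝ) 1, |x₁ σ - x₂ σ|) :=
  Psi_stability_in_x_general L Sinf S Mb Xb hL hSinf hS hXb a ha ha0 sgn hs_bdd hs_lip_pos
    hs_lip_neg m hm hmn hmm hmb x₁ x₂ hx₁c hx₂c hx₁mono hx₂mono hx₁b hx₂b Ψ hΨ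
end

section
/- Let x₂ : [0,1]ᵈ → ℝᵈ be bi-Lipschitz with constant C (i.e., |s − s⋆|/C ≤ |x₂(s) − x₂(s⋆)| ≤ C|s − s⋆|), and let S : ℝᵈ → [0,∞) be locally integrable. Then there is a compact set K ⊂ ℝᵈ, depending only on C, d and sup|x₂|, such that for every s ∈ [0,1]ᵈ, ∫_{[0,1]ᵈ} S(x₂(s) − x₂(s⋆)) ds⋆ ≤ C' ∫_K S(y) dy, with C' depending only on C and d. -/
open MeasureTheory Set Function Metric Module
open scoped NNReal ENNReal

/-! The map `s' ↦ x₂ s - x₂ s'` sends the unit cube into the ball of radius `C` (the cube has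
diameter `1` in the sup norm), and by the lower bi-Lipschitz bound it is injective there with an
inverse that is Lipschitz of constant `C * √d` for the Euclidean norm. A Lipschitz map of constant
`L` enlarges Hausdorff measure, hence any Haar measure, by at most `L ^ d`, so the push-forward of
Lebesgue measure on the cube is at most `(C * √d) ^ d` times Lebesgue measure on the ball;
integrating `S` against both measures gives the estimate. -/

section AddHaar

variable {E : Type*} [NormedAddCommGroup E] [NormedSpace ℝ E] [FiniteDimensional ℝ E]
  [MeasurableSpace E] [BorelSpace E] (μ : Measure E) [μ.IsAddHaarMeasure]

theorem LipschitzOnWith.addHaar_image_le {g : E → E} {K : ℝ≥0} {A : Set E}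
    (hg : LipschitzOnWith K g A) : μ (g '' A) ≤ (K : ℝ≥0∞) ^ finrank ℝ E * μ A := by
  rw [μ.isAddLeftInvariant_eq_smul μH[finrank ℝ E], Measure.coe_nnreal_smul_apply,
    Measure.coe_nnreal_smul_apply, mul_left_comm]
  gcongr
  simpa only [ENNReal.rpow_natCast] using hg.hausdorffMeasure_image_le (Nat.cast_nonneg _)

theorem MeasureTheory.Measure.map_restrict_le_smul_restrict_of_antilipschitz {T : E → E}
    {s t : Set E} {L : ℝ≥0} (hT : AntilipschitzWith L (s.domRestrict T)) (hst : MapsTo T s t) :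
    (μ.restrict s).map T ≤ ((L : ℝ≥0∞) ^ finrank ℝ E) • μ.restrict t := by
  by_cases hTm : AEMeasurable T (μ.restrict s)
  swap
  · simp only [Measure.map_of_not_aemeasurable hTm, Measure.zero_le]
  have hinv : LipschitzOnWith L (invFunOn T s) (T '' s) :=
    lipschitzOnWith_iff_restrict.2 <| hT.to_rightInvOn' (fun _ hy => invFunOn_mem hy)
      (fun _ hy => invFunOn_eq hy)
  refine Measure.le_iff.2 fun B hB => ?_
  rw [Measure.map_apply_of_aemeasurable hTm hB,
    Measure.restrict_apply₀ (hTm.nullMeasurable hB), Measure.smul_apply,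
    Measure.restrict_apply hB, smul_eq_mul]
  have hsub : T ⁻¹' B ∩ s ⊆ invFunOn T s '' (B ∩ T '' s) := by
    rintro a ⟨haB, ha⟩
    exact ⟨T a, ⟨haB, mem_image_of_mem T ha⟩,
      (injOn_iff_injective.2 hT.injective).leftInvOn_invFunOn ha⟩
  calc μ (T ⁻¹' B ∩ s) ≤ μ (invFunOn T s '' (B ∩ T '' s)) := measure_mono hsub
    _ ≤ (L : ℝ≥0∞) ^ finrank ℝ E * μ (B ∩ T '' s) :=
      (hinv.mono inter_subset_right).addHaar_image_le μ
    _ ≤ (L : ℝ≥0∞) ^ finrank ℝ E * μ (B ∩ t) := by gcongr; exact hst.image_subset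

theorem setIntegral_comp_le_of_antilipschitz {T : E → E} {s t : Set E} {L : ℝ≥0}
    (hT : AntilipschitzWith L (s.domRestrict T)) (hTm : AEMeasurable T (μ.restrict s))
    (hst : MapsTo T s t) {f : E → ℝ} (hf₀ : 0 ≤ᵐ[μ.restrict t] f) (hf : IntegrableOn f t μ) :
    ∫ x in s, f (T x) ∂μ ≤ (L : ℝ) ^ finrank ℝ E * ∫ y in t, f y ∂μ := by
  have hle := Measure.map_restrict_le_smul_restrict_of_antilipschitz μ hT hst
  have hc : (L : ℝ≥0∞) ^ finrank ℝ E ≠ ∞ := ENNReal.pow_ne_top ENNReal.coe_ne_top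
  have hac : (μ.restrict s).map T ≪ μ.restrict t :=
    (Measure.absolutelyContinuous_of_le hle).trans Measure.smul_absolutelyContinuous
  calc ∫ x in s, f (T x) ∂μ = ∫ y, f y ∂(μ.restrict s).map T :=
        (integral_map hTm (hf.aestronglyMeasurable.mono_ac hac)).symm
    _ ≤ ∫ y, f y ∂((L : ℝ≥0∞) ^ finrank ℝ E • μ.restrict t) :=
        integral_mono_measure hle (Measure.ae_smul_measure hf₀ _) (hf.smul_measure hc)
    _ = (L : ℝ) ^ finrank ℝ E * ∫ y in t, f y ∂μ := by
        rw [integral_smul_measure, smul_eq_mul, ENNReal.toReal_pow, ENNReal.coe_toReal]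

end AddHaar

theorem PiLp.dist_le_sqrt_card_mul_dist_ofLp {ι : Type*} [Fintype ι] {β : ι → Type*}
    [∀ i, PseudoMetricSpace (β i)] (x y : PiLp 2 β) :
    dist x y ≤ √(Fintype.card ι) * dist x.ofLp y.ofLp := by
  simpa [Real.sqrt_eq_rpow, one_div] using (PiLp.antilipschitzWith_ofLp 2 β).le_mul_dist x y

theorem dist_le_one_of_mem_unitCube {ι : Type*} [Fintype ι] {x y : ι → ℝ}
    (hx : x ∈ Set.pi univ fun _ => Icc (0 : ℝ) 1)
    (hy : y ∈ Set.pi univ fun _ => Icc (0 : ℝ) 1) :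
    dist x y ≤ 1 := by
  rw [pi_univ_Icc] at hx hy
  refine (Real.dist_le_of_mem_pi_Icc hx hy).trans ((dist_pi_le_iff zero_le_one).2 fun _ => ?_)
  simp

section EuclideanSpace

variable {ι : Type*} [Fintype ι] {F : Type*} [NormedAddCommGroup F]
  {f : EuclideanSpace ℝ ι → F} {s : Set (ι → ℝ)} {C : ℝ}

theorem EuclideanSpace.lipschitzOnWith_of_norm_sub_le
    (h : ∀ a ∈ s, ∀ b ∈ s, ‖f (WithLp.toLp 2 a) - f (WithLp.toLp 2 b)‖ ≤ C * ‖a - b‖) :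
    LipschitzOnWith C.toNNReal f (WithLp.ofLp ⁻¹' s) := by
  refine LipschitzOnWith.of_dist_le_mul fun a ha b hb => ?_
  have hab := h _ ha _ hb
  rw [WithLp.toLp_ofLp, WithLp.toLp_ofLp, ← dist_eq_norm, ← dist_eq_norm] at hab
  calc dist (f a) (f b) ≤ C * dist a.ofLp b.ofLp := hab
    _ ≤ C.toNNReal * dist a.ofLp b.ofLp := by gcongr; exact Real.le_coe_toNNReal C
    _ ≤ C.toNNReal * dist a b := by
        gcongr
        simpa using (PiLp.lipschitzWith_ofLp 2 _).dist_le_mul a b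

theorem EuclideanSpace.antilipschitzWith_const_sub_of_norm_sub_le (hC : 0 < C) (c : F)
    (h : ∀ a ∈ s, ∀ b ∈ s, ‖a - b‖ / C ≤ ‖f (WithLp.toLp 2 a) - f (WithLp.toLp 2 b)‖) :
    AntilipschitzWith (C * √(Fintype.card ι)).toNNReal
      ((WithLp.ofLp ⁻¹' s).domRestrict fun y => c - f y) := by
  refine AntilipschitzWith.of_le_mul_dist fun ⟨a, ha⟩ ⟨b, hb⟩ => ?_
  have hab := h _ ha _ hb
  rw [WithLp.toLp_ofLp, WithLp.toLp_ofLp, div_le_iff₀ hC, ← dist_eq_norm,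
    ← dist_eq_norm] at hab
  simp only [Subtype.dist_eq, domRestrict_apply, dist_sub_left,
    Real.coe_toNNReal _ (by positivity : 0 ≤ C * √(Fintype.card ι))]
  calc dist a b ≤ √(Fintype.card ι) * dist a.ofLp b.ofLp :=
        PiLp.dist_le_sqrt_card_mul_dist_ofLp a b
    _ ≤ √(Fintype.card ι) * (dist (f a) (f b) * C) := by gcongr
    _ = C * √(Fintype.card ι) * dist (f a) (f b) := by ring

end EuclideanSpace

theorem biLipschitz_change_of_variables {d : ℕ} (hd : 1 ≤ d) (C : ℝ) (hC : 1 < C)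
    (x₂ : EuclideanSpace ℝ (Fin d) → EuclideanSpace ℝ (Fin d))
    (hbi : ∀ s ∈ Set.pi Set.univ (fun _ : Fin d => Set.Icc (0:ℝ) 1),
      ∀ s' ∈ Set.pi Set.univ (fun _ : Fin d => Set.Icc (0:ℝ) 1),
        ‖s - s'‖ / C ≤ ‖x₂ (WithLp.toLp 2 s) - x₂ (WithLp.toLp 2 s')‖ ∧ ‖x₂ (WithLp.toLp 2 s) - x₂ (WithLp.toLp 2 s')‖ ≤ C * ‖s - s'‖)
    (S : EuclideanSpace ℝ (Fin d) → ℝ) (hSn : ∀ y, 0 ≤ S y)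
    (hSloc : LocallyIntegrable S) :
    ∃ K : Set (EuclideanSpace ℝ (Fin d)), IsCompact K ∧ ∃ C' : ℝ, 0 < C' ∧
      ∀ s ∈ Set.pi Set.univ (fun _ : Fin d => Set.Icc (0:ℝ) 1),
        ∫ s' in Set.pi Set.univ (fun _ : Fin d => Set.Icc (0:ℝ) 1),
            S (x₂ (WithLp.toLp 2 s) - x₂ (WithLp.toLp 2 s'))
          ≤ C' * ∫ y in K, S y := by
  set cube := Set.pi univ fun _ : Fin d => Icc (0 : ℝ) 1
  have hC₀ : 0 < C := zero_lt_one.trans hC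
  have hL₀ : 0 < C * √d := mul_pos hC₀ (Real.sqrt_pos.2 (by exact_mod_cast hd))
  refine ⟨closedBall 0 C, isCompact_closedBall _ _, (C * √d) ^ d, pow_pos hL₀ d,
    fun s hs => ?_⟩
  set T : EuclideanSpace ℝ (Fin d) → EuclideanSpace ℝ (Fin d) :=
    fun y => x₂ (WithLp.toLp 2 s) - x₂ y
  have hT_maps : MapsTo T (WithLp.ofLp ⁻¹' cube) (closedBall 0 C) := fun y hy => by
    have h := (hbi s hs _ hy).2
    rw [WithLp.toLp_ofLp, ← dist_eq_norm] at h
    rw [mem_closedBall_zero_iff]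
    calc ‖T y‖ ≤ C * dist s y.ofLp := h
      _ ≤ C := mul_le_of_le_one_right hC₀.le (dist_le_one_of_mem_unitCube hs hy)
  have hT_meas : AEMeasurable T (volume.restrict (WithLp.ofLp ⁻¹' cube)) :=
    (continuousOn_const.sub (EuclideanSpace.lipschitzOnWith_of_norm_sub_le
      fun a ha b hb => (hbi a ha b hb).2).continuousOn).aemeasurable
      ((MeasurableSet.univ_pi fun _ => measurableSet_Icc).preimage
        (WithLp.measurable_ofLp 2 _))
  calc ∫ s' in cube, S (T (WithLp.toLp 2 s')) = ∫ y in WithLp.ofLp ⁻¹' cube, S (T y) :=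
        (PiLp.volume_preserving_toLp (Fin d)).setIntegral_preimage_emb
          (MeasurableEquiv.toLp 2 _).measurableEmbedding (S ∘ T) (WithLp.ofLp ⁻¹' cube)
    _ ≤ (C * √d) ^ d * ∫ y in closedBall 0 C, S y := by
        simpa [Real.coe_toNNReal _ hL₀.le] using setIntegral_comp_le_of_antilipschitz volume
          (EuclideanSpace.antilipschitzWith_const_sub_of_norm_sub_le hC₀ _
            fun a ha b hb => (hbi a ha b hb).1)
          hT_meas hT_maps (ae_of_all _ hSn)
          (hSloc.integrableOn_isCompact (isCompact_closedBall _ _))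
end
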